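/- Let M be a 3-connected matroid with a spike-like 3-separator P: an exactly 3-separating set with a partition {L1, …, Lt}, t ≥ 3, into 2-element sets such that Li ∪ Lj is a quad (both a circuit and a cocircuit) of M for all distinct i, j. Then r(P) = t + 1 and r*(P) = t + 1. -/

import Mathlib

open Set

namespace PaperDefs

variable {α : Type*}

/-- The rank of a set `X` in a matroid `M`, as an extended natural number:
the supremum of the cardinalities of independent subsets of `X`. -/
noncomputable def eRk (M : Matroid α) (X : Set α) : ℕ∞ :=
  ⨆ I ∈ {I | M.Indep I ∧ I ⊆ X}, I.encard

/-- Deletion of a set of elements from a matroid. -/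
def del (M : Matroid α) (D : Set α) : Matroid α := M.restrict (M.E \ D)

/-- Contraction of a set of elements in a matroid. -/
def con (M : Matroid α) (C : Set α) : Matroid α := (del M✶ C)✶

/-- A circuit: a minimal dependent set. -/
def Circuit (M : Matroid α) (C : Set α) : Prop :=
  M.Dep C ∧ ∀ D, D ⊂ C → M.Indep D

/-- A `k`-separation of `M`: a partition `(X, M.E \ X)` with connectivity
`λ(X) = r(X) + r(E−X) − r(M)` at most `k − 1`, and both sides of size at least `k`. -/
def kSeparation (M : Matroid α) (X : Set α) (k : ℕ) : Prop :=
  X ⊆ M.E ∧ eRk M X + eRk M (M.E \ X) ≤ eRk M M.E + ((k - 1 : ℕ) : ℕ∞) ∧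
    (k : ℕ∞) ≤ X.encard ∧ (k : ℕ∞) ≤ (M.E \ X).encard

/-- `M` is `n`-connected if it has no `k`-separations for `0 < k < n`. -/
def NConnected (M : Matroid α) (n : ℕ) : Prop :=
  ∀ k : ℕ, 0 < k → k < n → ∀ X : Set α, ¬ kSeparation M X k

/-- `X` is 3-separating in `M`: `λ_M(X) ≤ 2`. -/
def ThreeSeparating (M : Matroid α) (X : Set α) : Prop :=
  eRk M X + eRk M (M.E \ X) ≤ eRk M M.E + 2

/-- `X` is exactly 3-separating in `M`: `λ_M(X) = 2`. -/
def ExactlyThreeSeparating (M : Matroid α) (X : Set α) : Prop :=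
  eRk M X + eRk M (M.E \ X) = eRk M M.E + 2

/-- `N` is a simplification of `M`: `N` is obtained from `M` by deleting a set of
elements, `N` has no loops or parallel pairs (no circuits of size at most two), and
every element of `M` is in the closure of the ground set of `N`. -/
def IsSimplificationOf (N M : Matroid α) : Prop :=
  (∃ D ⊆ M.E, N = del M D) ∧ (∀ C, Circuit N C → 3 ≤ C.encard) ∧
    M.closure N.E = M.E

/-- `N` is a cosimplification of `M`: `N✶` is a simplification of `M✶`. -/
def IsCosimplificationOf (N M : Matroid α) : Prop :=
  IsSimplificationOf N✶ M✶

/-- `S` is a series class of `M`: a maximal nonempty set any two distinct elements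
of which form a series pair (a two-element cocircuit). -/
def IsSeriesClass (M : Matroid α) (S : Set α) : Prop :=
  S.Nonempty ∧ S ⊆ M.E ∧ (∀ a ∈ S, ∀ b ∈ S, a ≠ b → Circuit M✶ {a, b}) ∧
    (∀ a ∈ S, ∀ f, Circuit M✶ {a, f} → a ≠ f → f ∈ S)

/-- The full closure of `X` in `M`: the intersection of all sets containing `X ∩ M.E`
that are closed in both `M` and `M✶`. -/
def fullClosure (M : Matroid α) (X : Set α) : Set α :=
  ⋂₀ {F | X ∩ M.E ⊆ F ∧ M.closure F = F ∧ M✶.closure F = F}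

end PaperDefs

/-! The circuits `L i₀ ∪ L i` show that `L i₀` together with one element of every other leg
spans `P`, so `r(P) ≤ t + 1`; the cocircuits give `r*(P) ≤ t + 1` in the same way. On the
other hand `r*(P) + r(M) = |P| + r(E − P)` and `λ(P) = 2` give `r(P) + r*(P) = 2t + 2` once
`r(M)` is cancelled, which is possible because a 3-connected matroid has finite rank. -/

open PaperDefs

namespace PaperDefs

variable {α : Type*} {M : Matroid α} {X C : Set α}

theorem eRk_eq_eRk (M : Matroid α) (X : Set α) : eRk M X = M.eRk X := by
  refine le_antisymm (iSup₂_le fun I hI => hI.1.encard_le_eRk_of_subset hI.2) ?_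
  obtain ⟨I, hI⟩ := M.exists_isBasis' X
  rw [← hI.encard_eq_eRk]
  exact le_iSup₂ (f := fun J (_ : J ∈ {J | M.Indep J ∧ J ⊆ X}) => J.encard) I
    ⟨hI.indep, hI.subset⟩

theorem Circuit.isCircuit (hC : Circuit M C) : M.IsCircuit C :=
  Matroid.isCircuit_iff_forall_ssubset.2 ⟨hC.1, fun I hI => hC.2 I hI⟩

theorem exactlyThreeSeparating_iff :
    ExactlyThreeSeparating M X ↔ M.eRk X + M.eRk (M.E \ X) = M.eRank + 2 := by
  simp only [ExactlyThreeSeparating, eRk_eq_eRk, Matroid.eRk_ground]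

/-- Infinite rank would make every two-element set the small side of a 2-separation. -/
theorem NConnected.eRank_ne_top {n : ℕ} (h : NConnected M n) (hn : 2 < n) : M.eRank ≠ ⊤ := by
  intro htop
  have hE : M.E.Infinite := by
    rw [← encard_eq_top_iff, ← top_le_iff, ← htop]
    exact M.eRank_le_encard_ground
  obtain ⟨X, hXE, hX⟩ := exists_subset_encard_eq (show (2 : ℕ∞) ≤ M.E.encard by simp [hE])
  have hXfin : X.Finite := finite_of_encard_eq_coe hX
  refine h 2 two_pos hn X ⟨hXE, ?_, hX.ge, ?_⟩
  · simp [eRk_eq_eRk, htop]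
  · simp [(hE.sdiff hXfin).encard_eq]

end PaperDefs

namespace Matroid

variable {α : Type*} {M : Matroid α} {X : Set α}

theorem eRk_iUnion_le_of_isCircuit_union {ι : Type*} {L : ι → Set α} (i₀ : ι)
    (hL : ∀ i, (L i).encard = 2) (hC : ∀ i, i ≠ i₀ → M.IsCircuit (L i₀ ∪ L i)) :
    M.eRk (⋃ i, L i) ≤ ENat.card ι + 1 := by
  choose x y hxy hxyL using fun i => encard_eq_two.1 (hL i)
  set S := insert (y i₀) (range x)
  have hL₀S : L i₀ ⊆ S := by simp [S, hxyL i₀, insert_subset_iff]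
  have hspan : (⋃ i, L i) ⊆ S ∪ M.closure S := by
    refine iUnion_subset fun i => ?_
    obtain rfl | hi := eq_or_ne i i₀
    · exact hL₀S.trans subset_union_left
    refine subset_union_of_subset_right (subset_union_right.trans
      ((hC i hi).subset_closure_sdiff_singleton (y i) |>.trans (M.closure_subset_closure ?_))) _
    rw [union_sdiff_distrib, hxyL i, insert_sdiff_of_notMem _ (by simpa using hxy i), sdiff_self]
    exact union_subset (sdiff_subset.trans hL₀S) (by simp [S])
  have hS : S.encard ≤ ENat.card ι + 1 := calc
    S.encard ≤ (x '' univ).encard + 1 := by rw [image_univ]; exact encard_insert_le _ _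
    _ ≤ ENat.card ι + 1 := by grw [encard_image_le, encard_univ]
  calc M.eRk (⋃ i, L i) ≤ M.eRk (S ∪ M.closure S) := M.eRk_mono hspan
    _ = M.eRk S := by rw [eRk_union_closure_right_eq, union_self]
    _ ≤ ENat.card ι + 1 := (M.eRk_le_encard S).trans hS

theorem eRk_add_eRk_dual_eq (hX : X ⊆ M.E) (hM : M.eRank ≠ ⊤) {k : ℕ∞}
    (hk : M.eRk X + M.eRk (M.E \ X) = M.eRank + k) :
    M.eRk X + M✶.eRk X = X.encard + k := by
  refine (ENat.add_left_injective_of_ne_top hM) ?_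
  calc M.eRk X + M✶.eRk X + M.eRank = M.eRk X + (M.eRk (M.E \ X) + X.encard) := by
        rw [add_assoc, M.eRk_dual_add_eRank X]
    _ = X.encard + k + M.eRank := by rw [← add_assoc, hk]; ring

end Matroid

theorem ENat.eq_of_add_eq_add_of_le {a b c : ℕ∞} (hc : c ≠ ⊤) (ha : a ≤ c) (hb : b ≤ c)
    (h : a + b = c + c) : a = c := by
  lift c to ℕ using hc
  lift a to ℕ using ne_top_of_le_ne_top (natCast_ne_top c) ha
  lift b to ℕ using ne_top_of_le_ne_top (natCast_ne_top c) hb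
  norm_cast at *
  omega

/-- If `P` is a spike-like 3-separator of a 3-connected matroid `M`,
with partition `{L 0, …, L (t-1)}` into `t ≥ 3` two-element legs whose pairwise
unions are quads, then `r(P) = t + 1` and `r*(P) = t + 1`. -/
theorem statement_18 {α : Type*} (M : Matroid α) (P : Set α) (t : ℕ)
    (L : Fin t → Set α) (h3 : NConnected M 3) (ht : 3 ≤ t)
    (hPE : P ⊆ M.E) (hexact : ExactlyThreeSeparating M P)
    (hdisj : ∀ i j : Fin t, i ≠ j → Disjoint (L i) (L j))
    (hcover : (⋃ i, L i) = P)
    (hcard : ∀ i, (L i).encard = 2)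
    (hquad : ∀ i j : Fin t, i ≠ j →
      Circuit M (L i ∪ L j) ∧ Circuit M✶ (L i ∪ L j)) :
    eRk M P = t + 1 ∧ eRk M✶ P = t + 1 := by
  have hPcard : P.encard = t + t := by
    rw [← hcover, encard_iUnion_of_finite hdisj]
    simp [finsum_eq_sum_of_fintype, hcard, mul_two]
  have hsum : M.eRk P + M✶.eRk P = (t + 1) + (t + 1) := by
    rw [M.eRk_add_eRk_dual_eq hPE (h3.eRank_ne_top (by norm_num))
      (exactlyThreeSeparating_iff.1 hexact), hPcard]
    ring
  let i₀ : Fin t := ⟨0, by omega⟩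
  have hr : M.eRk P ≤ t + 1 := by
    simpa [hcover] using M.eRk_iUnion_le_of_isCircuit_union i₀ hcard
      fun i hi => (hquad i₀ i hi.symm).1.isCircuit
  have hr' : M✶.eRk P ≤ t + 1 := by
    simpa [hcover] using M✶.eRk_iUnion_le_of_isCircuit_union i₀ hcard
      fun i hi => (hquad i₀ i hi.symm).2.isCircuit
  have htop : (t : ℕ∞) + 1 ≠ ⊤ := by simp
  rw [eRk_eq_eRk, eRk_eq_eRk]
  exact ⟨ENat.eq_of_add_eq_add_of_le htop hr hr' hsum,
    ENat.eq_of_add_eq_add_of_le htop hr' hr (by rw [add_comm, hsum])⟩
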